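/- arXiv:1702.01935 — 9 statements merged into one kernel-verified Lean document; each statement's English description precedes it below -/
import Mathlib

section
/- For every real number ξ, every τ ≥ 0, and the penalty φ(ω) = (τ²/2)·max(1−ω, 0), the infimum over ω ≥ 0 of (1/2)·ω·ξ² + φ(ω) is attained and equals L_τ(ξ) = (1/2)·min(ξ², τ²). -/
/-- For every real ξ and every τ ≥ 0, the infimum over ω ≥ 0 of
    (1/2)·ω·ξ² + φ(ω), with φ(ω) = (τ²/2)·max(1−ω, 0), is attained and
    equals the truncated least squares loss L_τ(ξ) = (1/2)·min(ξ², τ²). -/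
theorem truncated_loss_reweighted_representation
    (ξ τ : ℝ) (hτ : 0 ≤ τ)
    (φ : ℝ → ℝ) (hφ : φ = fun ω => τ ^ 2 / 2 * max (1 - ω) 0) :
    IsLeast ((fun ω : ℝ => 1 / 2 * ω * ξ ^ 2 + φ ω) '' {ω : ℝ | 0 ≤ ω})
      (1 / 2 * min (ξ ^ 2) (τ ^ 2)) := by
  subst hφ
  constructor
  · rcases le_or_gt (ξ ^ 2) (τ ^ 2) with h | h
    · exact ⟨1, by norm_num, by simp [min_eq_left h]⟩
    · exact ⟨0, by simp, by simp [min_eq_right h.le]; ring⟩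
  · rintro y ⟨ω, hω, rfl⟩
    simp only [Set.mem_setOf_eq] at hω
    simp only []
    have hm : 0 ≤ min (ξ ^ 2) (τ ^ 2) := le_min (sq_nonneg ξ) (sq_nonneg τ)
    rcases le_or_gt 1 ω with h1 | h1
    · have : max (1 - ω) 0 = 0 := max_eq_right (by linarith)
      rw [this]
      have : min (ξ ^ 2) (τ ^ 2) ≤ ω * ξ ^ 2 :=
        le_trans (min_le_left _ _) (le_mul_of_one_le_left (sq_nonneg ξ) h1)
      nlinarith
    · have : max (1 - ω) 0 = 1 - ω := max_eq_left (by linarith)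
      rw [this]
      have h2 : min (ξ ^ 2) (τ ^ 2) ≤ ξ ^ 2 := min_le_left _ _
      have h3 : min (ξ ^ 2) (τ ^ 2) ≤ τ ^ 2 := min_le_right _ _
      nlinarith
end

section
/- Let τ ≥ 0, ξ ∈ ℝ and φ(ω) = (τ²/2)·max(1−ω, 0). If |ξ| ≤ τ then ω = 1 minimizes the function ω ↦ (1/2)·ω·ξ² + φ(ω) over ω ≥ 0, and if |ξ| > τ then ω = 0 is the unique minimizer of this function over ω ≥ 0. -/
/-- Let τ ≥ 0, ξ ∈ ℝ and φ(ω) = (τ²/2)·max(1−ω, 0).  If |ξ| ≤ τ then ω = 1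
    minimizes ω ↦ (1/2)·ω·ξ² + φ(ω) over ω ≥ 0, and if |ξ| > τ then ω = 0 is
    the unique minimizer of this function over ω ≥ 0. -/
theorem truncated_loss_optimal_weight
    (ξ τ : ℝ) (hτ : 0 ≤ τ)
    (φ : ℝ → ℝ) (hφ : φ = fun ω => τ ^ 2 / 2 * max (1 - ω) 0)
    (g : ℝ → ℝ) (hg : g = fun ω => 1 / 2 * ω * ξ ^ 2 + φ ω) :
    (|ξ| ≤ τ → ∀ ω : ℝ, 0 ≤ ω → g 1 ≤ g ω) ∧
    (|ξ| > τ → ∀ ω : ℝ, 0 ≤ ω → ω ≠ 0 → g 0 < g ω) := by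
  subst hφ hg
  have habs : |ξ| ^ 2 = ξ ^ 2 := sq_abs ξ
  constructor
  · intro h ω hω
    have h2 : ξ ^ 2 ≤ τ ^ 2 := by nlinarith [abs_nonneg ξ]
    simp only
    rcases le_total (1 - ω) 0 with h1 | h1
    · rw [max_eq_right h1, max_eq_left (by norm_num)]
      nlinarith [sq_nonneg ξ]
    · rw [max_eq_left h1, max_eq_left (by norm_num)]
      nlinarith
  · intro h ω hω hne
    have h2 : τ ^ 2 < ξ ^ 2 := by nlinarith [abs_nonneg ξ]
    have hω' : 0 < ω := lt_of_le_of_ne hω (Ne.symm hne)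
    simp only
    rcases le_total (1 - ω) 0 with h1 | h1
    · rw [max_eq_right h1, max_eq_left (by norm_num)]
      nlinarith
    · rw [max_eq_left h1, max_eq_left (by norm_num)]
      nlinarith
end

section
/- For every p > 0 and τ ≥ 0, the smoothed function L̄_2(ξ) = (1/2)·max(0, ξ² − τ²) + (1/(2p))·log(1 + exp(−p·|ξ² − τ²|)) is differentiable at every ξ ∈ ℝ with derivative L̄_2'(ξ) = ξ · min{1, exp(p·(ξ² − τ²))} / (1 + exp(−p·|ξ² − τ²|)). -/
/-! `L̄₂(ξ)` is `(2p)⁻¹ · log (1 + exp (p (ξ² − τ²)))`, a rescaled softplus of `ξ² − τ²`: the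
`max`/`|·|` form is the numerically stable way of writing softplus. Its derivative is therefore
`ξ · sigmoid (p (ξ² − τ²))`, and the stated formula is the sigmoid written in the same stable form. -/

open Real

lemma Real.log_one_add_exp_eq_max_add (x : ℝ) :
    log (1 + exp x) = max 0 x + log (1 + exp (-|x|)) := by
  rcases le_total 0 x with hx | hx
  · have hfactor : 1 + exp x = exp x * (1 + exp (-x)) := by
      rw [mul_add, mul_one, ← exp_add, add_neg_cancel, exp_zero, add_comm]
    rw [abs_of_nonneg hx, max_eq_right hx, hfactor,
      log_mul (exp_ne_zero _) (by positivity), log_exp]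
  · rw [abs_of_nonpos hx, max_eq_left hx, neg_neg, zero_add]

lemma Real.hasDerivAt_log_one_add_exp (x : ℝ) :
    HasDerivAt (fun y => log (1 + exp y)) (sigmoid x) x := by
  have hderiv := ((hasDerivAt_exp x).const_add 1).log (by positivity)
  convert hderiv using 1
  rw [sigmoid_def, exp_neg]
  field_simp
  ring

lemma Real.sigmoid_eq_min_div (x : ℝ) :
    sigmoid x = min 1 (exp x) / (1 + exp (-|x|)) := by
  rw [sigmoid_def]
  rcases le_total 0 x with hx | hx
  · rw [abs_of_nonneg hx, min_eq_left (one_le_exp hx), one_div]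
  · rw [abs_of_nonpos hx, min_eq_right (exp_le_one_iff.mpr hx), neg_neg, exp_neg]
    field_simp
    ring

theorem smoothed_L2_hasDerivAt_general
    (p τ : ℝ) (hp : 0 < p)
    (L2bar : ℝ → ℝ)
    (hL2bar : L2bar = fun ξ => 1 / 2 * max 0 (ξ ^ 2 - τ ^ 2)
      + 1 / (2 * p) * Real.log (1 + Real.exp (-p * |ξ ^ 2 - τ ^ 2|))) :
    ∀ ξ : ℝ, HasDerivAt L2bar
      (ξ * min 1 (Real.exp (p * (ξ ^ 2 - τ ^ 2)))
        / (1 + Real.exp (-p * |ξ ^ 2 - τ ^ 2|))) ξ := by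
  intro ξ
  have hsoftplus : L2bar = fun ξ => 1 / (2 * p) * log (1 + exp (p * (ξ ^ 2 - τ ^ 2))) := by
    funext x
    have hmax : max 0 (p * (x ^ 2 - τ ^ 2)) = p * max 0 (x ^ 2 - τ ^ 2) := by
      rw [mul_max_of_nonneg _ _ hp.le, mul_zero]
    rw [hL2bar, log_one_add_exp_eq_max_add, hmax, abs_mul, abs_of_pos hp, ← neg_mul]
    field_simp
  have hinner : HasDerivAt (fun x => p * (x ^ 2 - τ ^ 2)) (p * (2 * ξ)) ξ := by
    simpa using ((hasDerivAt_pow 2 ξ).sub_const (τ ^ 2)).const_mul p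
  have hderiv := ((hasDerivAt_log_one_add_exp _).comp ξ hinner).const_mul (1 / (2 * p))
  rw [hsoftplus]
  refine hderiv.congr_deriv ?_
  rw [sigmoid_eq_min_div, abs_mul, abs_of_pos hp, neg_mul]
  field_simp

/-- For every p > 0 and τ ≥ 0, the smoothed function
    L̄_2(ξ) = (1/2)·max(0, ξ² − τ²) + (1/(2p))·log(1 + exp(−p·|ξ² − τ²|))
    is differentiable at every ξ ∈ ℝ with derivative
    L̄_2'(ξ) = ξ · min{1, exp(p·(ξ² − τ²))} / (1 + exp(−p·|ξ² − τ²|)). -/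
theorem smoothed_L2_hasDerivAt
    (p τ : ℝ) (hp : 0 < p) (hτ : 0 ≤ τ)
    (L2bar : ℝ → ℝ)
    (hL2bar : L2bar = fun ξ => 1 / 2 * max 0 (ξ ^ 2 - τ ^ 2)
      + 1 / (2 * p) * Real.log (1 + Real.exp (-p * |ξ ^ 2 - τ ^ 2|))) :
    ∀ ξ : ℝ, HasDerivAt L2bar
      (ξ * min 1 (Real.exp (p * (ξ ^ 2 - τ ^ 2)))
        / (1 + Real.exp (-p * |ξ ^ 2 - τ ^ 2|))) ξ :=
  smoothed_L2_hasDerivAt_general p τ hp L2bar hL2bar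
end

section
/- For every p > 0 and τ ≥ 0, the smoothed function L̄_2 : ℝ → ℝ, L̄_2(ξ) = (1/2)·max(0, ξ² − τ²) + (1/(2p))·log(1 + exp(−p·|ξ² − τ²|)), is convex on ℝ. -/
/-!
Writing `softplus t = log (1 + exp t) = max 0 t + log (1 + exp (-|t|))`, the smoothed function is
`(2p)⁻¹ · softplus (p (ξ² - τ²))`. The softplus is convex and increasing (its derivative is the
sigmoid), and `ξ ↦ p (ξ² - τ²)` is convex, so the composition is convex.
-/

open Real Set

theorem ConvexOn.comp_of_monotone {𝕜 E α β : Type*} [Semiring 𝕜] [PartialOrder 𝕜]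
    [AddCommMonoid E] [AddCommMonoid α] [PartialOrder α] [AddCommMonoid β] [PartialOrder β]
    [SMul 𝕜 E] [SMul 𝕜 α] [SMul 𝕜 β] {s : Set E} {f : E → β} {g : β → α}
    (hg : ConvexOn 𝕜 univ g) (hg' : Monotone g) (hf : ConvexOn 𝕜 s f) : ConvexOn 𝕜 s (g ∘ f) :=
  ⟨hf.1, fun _ hx _ hy _ _ ha hb hab =>
    (hg' (hf.2 hx hy ha hb hab)).trans (hg.2 trivial trivial ha hb hab)⟩

namespace Real

noncomputable def softplus (x : ℝ) : ℝ := log (1 + exp x)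

theorem hasDerivAt_softplus (x : ℝ) : HasDerivAt softplus (sigmoid x) x := by
  unfold softplus
  have h : HasDerivAt (fun t => 1 + exp t) (exp x) x := (hasDerivAt_exp x).const_add 1
  convert h.log (by positivity) using 1
  rw [sigmoid_def, exp_neg]
  field_simp
  ring

theorem monotone_softplus : Monotone softplus := fun _ _ hab =>
  log_le_log (by positivity) (by gcongr)

theorem convexOn_softplus : ConvexOn ℝ univ softplus := by
  refine Monotone.convexOn_univ_of_deriv (fun x => (hasDerivAt_softplus x).differentiableAt) ?_
  rw [show deriv softplus = sigmoid from funext fun x => (hasDerivAt_softplus x).deriv]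
  exact sigmoid_monotone

theorem softplus_eq_max_add (t : ℝ) : softplus t = max 0 t + log (1 + exp (-|t|)) := by
  rcases le_or_gt 0 t with ht | ht
  · rw [abs_of_nonneg ht, max_eq_right ht, softplus,
      show 1 + exp t = exp t * (1 + exp (-t)) by rw [mul_add, ← exp_add]; simp [add_comm],
      log_mul (exp_ne_zero t) (by positivity), log_exp]
  · rw [abs_of_neg ht, max_eq_left ht.le, neg_neg, zero_add, softplus]

theorem inv_mul_softplus_mul {c : ℝ} (hc : 0 < c) (t : ℝ) :
    c⁻¹ * softplus (c * t) = max 0 t + c⁻¹ * log (1 + exp (-c * |t|)) := by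
  have hmax : max 0 (c * t) = c * max 0 t := by rw [mul_max_of_nonneg _ _ hc.le, mul_zero]
  rw [softplus_eq_max_add, hmax, abs_mul, abs_of_pos hc, mul_add, inv_mul_cancel_left₀ hc.ne',
    neg_mul]

end Real

theorem smoothed_L2_convex_general (p τ : ℝ) (hp : 0 < p) :
    ConvexOn ℝ Set.univ
      (fun ξ : ℝ => 1 / 2 * max 0 (ξ ^ 2 - τ ^ 2)
        + 1 / (2 * p) * Real.log (1 + Real.exp (-p * |ξ ^ 2 - τ ^ 2|))) := by
  have hquad : ConvexOn ℝ univ fun ξ : ℝ => p * (ξ ^ 2 - τ ^ 2) := by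
    refine ((even_two.convexOn_pow.smul hp.le).add_const (-(p * τ ^ 2))).congr fun ξ _ => ?_
    simp only [Pi.add_apply, smul_eq_mul]
    ring
  have hconv := (convexOn_softplus.comp_of_monotone monotone_softplus hquad).smul
    (by positivity : (0 : ℝ) ≤ 1 / (2 * p))
  refine hconv.congr fun ξ _ => ?_
  simp only [Function.comp_apply, smul_eq_mul]
  rw [show 1 / (2 * p) * softplus (p * (ξ ^ 2 - τ ^ 2))
      = 1 / 2 * (p⁻¹ * softplus (p * (ξ ^ 2 - τ ^ 2))) by ring, inv_mul_softplus_mul hp]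
  ring

/-- For every p > 0 and τ ≥ 0, the smoothed function
    L̄_2(ξ) = (1/2)·max(0, ξ² − τ²) + (1/(2p))·log(1 + exp(−p·|ξ² − τ²|))
    is convex on ℝ. -/
theorem smoothed_L2_convex (p τ : ℝ) (hp : 0 < p) (hτ : 0 ≤ τ) :
    ConvexOn ℝ Set.univ
      (fun ξ : ℝ => 1 / 2 * max 0 (ξ ^ 2 - τ ^ 2)
        + 1 / (2 * p) * Real.log (1 + Real.exp (-p * |ξ ^ 2 - τ ^ 2|))) :=
  smoothed_L2_convex_general p τ hp
end

section
/- Let H be a real Hilbert space, let φ_1, …, φ_m ∈ H with m ≥ 1, y ∈ ℝ^m, λ > 0, τ > 0, and define F(w, b) = (λ/2)·‖w‖² + (1/m)·Σ_{i=1}^m L_τ(y_i − ⟨w, φ_i⟩ − b). Then there exist coefficients α ∈ ℝ^m and a bias b* ∈ ℝ such that the pair (Σ_{i=1}^m α_i·φ_i, b*) is a global minimizer of F; that is, F(Σ_i α_i·φ_i, b*) ≤ F(w, b) for all w ∈ H and all b ∈ ℝ. -/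
/-!
Projecting `w` onto `V = span {φ i}` keeps every `⟪w, φ i⟫` and does not increase `‖w‖`, so it
suffices to minimise the objective over the finite-dimensional space `V × ℝ`. There it is
continuous, and its sublevel set at the level `F 0 (y i₀) < τ² / 2` is bounded: the regulariser
bounds `‖w‖`, and a risk below `τ² / 2` forces some residual `y i - ⟪w, φ i⟫ - b` below `τ` in
absolute value, which bounds `b`. A continuous function with a bounded sublevel set on a proper
space attains its minimum.
-/

open Finset Bornology

noncomputable section

def truncSqLoss (τ ξ : ℝ) : ℝ := 1 / 2 * min (ξ ^ 2) (τ ^ 2)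

lemma truncSqLoss_nonneg (τ ξ : ℝ) : 0 ≤ truncSqLoss τ ξ := by
  unfold truncSqLoss; positivity

lemma truncSqLoss_le (τ ξ : ℝ) : truncSqLoss τ ξ ≤ τ ^ 2 / 2 := by
  unfold truncSqLoss; linarith [min_le_right (ξ ^ 2) (τ ^ 2)]

@[simp]
lemma truncSqLoss_zero (τ : ℝ) : truncSqLoss τ 0 = 0 := by
  simp [truncSqLoss, sq_nonneg]

lemma abs_lt_abs_of_truncSqLoss_lt {τ ξ : ℝ} (h : truncSqLoss τ ξ < τ ^ 2 / 2) : |ξ| < |τ| := by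
  unfold truncSqLoss at h
  exact sq_lt_sq.mp (by_contra fun hξ => by rw [min_eq_right (not_lt.mp hξ)] at h; linarith)

section

variable {ι H : Type*} [Fintype ι] [NormedAddCommGroup H] [InnerProductSpace ℝ H]

def empiricalRisk (τ : ℝ) (φ : ι → H) (y : ι → ℝ) (w : H) (b : ℝ) : ℝ :=
  1 / Fintype.card ι * ∑ i, truncSqLoss τ (y i - inner ℝ w (φ i) - b)

def rlssvmObjective (lam τ : ℝ) (φ : ι → H) (y : ι → ℝ) (w : H) (b : ℝ) : ℝ :=
  lam / 2 * ‖w‖ ^ 2 + empiricalRisk τ φ y w b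

variable {τ : ℝ} {φ : ι → H} {y : ι → ℝ}

lemma empiricalRisk_nonneg (w : H) (b : ℝ) : 0 ≤ empiricalRisk τ φ y w b := by
  unfold empiricalRisk
  have := Finset.sum_nonneg fun i (_ : i ∈ univ) => truncSqLoss_nonneg τ (y i - inner ℝ w (φ i) - b)
  positivity

lemma empiricalRisk_lt_iff [Nonempty ι] {w : H} {b : ℝ} :
    empiricalRisk τ φ y w b < τ ^ 2 / 2 ↔
      ∑ i, truncSqLoss τ (y i - inner ℝ w (φ i) - b) < ∑ _i : ι, τ ^ 2 / 2 := by
  have hcard : (0 : ℝ) < Fintype.card ι := by exact_mod_cast Fintype.card_pos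
  rw [empiricalRisk, sum_const, card_univ, nsmul_eq_mul, one_div, inv_mul_lt_iff₀ hcard]

lemma empiricalRisk_zero_lt (hτ : τ ≠ 0) (i₀ : ι) : empiricalRisk τ φ y 0 (y i₀) < τ ^ 2 / 2 := by
  have : Nonempty ι := ⟨i₀⟩
  refine empiricalRisk_lt_iff.mpr (sum_lt_sum (fun i _ => truncSqLoss_le _ _) ⟨i₀, mem_univ _, ?_⟩)
  simpa using (by positivity : 0 < τ ^ 2)

lemma exists_abs_sub_lt_of_empiricalRisk_lt [Nonempty ι] {w : H} {b : ℝ}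
    (h : empiricalRisk τ φ y w b < τ ^ 2 / 2) : ∃ i, |y i - inner ℝ w (φ i) - b| < |τ| := by
  obtain ⟨i, -, hi⟩ := exists_lt_of_sum_lt (empiricalRisk_lt_iff.mp h)
  exact ⟨i, abs_lt_abs_of_truncSqLoss_lt hi⟩

lemma empiricalRisk_starProjection (K : Submodule ℝ H) [K.HasOrthogonalProjection]
    (hφ : ∀ i, φ i ∈ K) (w : H) (b : ℝ) :
    empiricalRisk τ φ y (K.starProjection w) b = empiricalRisk τ φ y w b := by
  simp only [empiricalRisk, K.inner_starProjection_left_eq_right,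
    (K.starProjection_eq_self_iff).mpr (hφ _)]

variable {lam : ℝ}

lemma rlssvmObjective_starProjection_le (hlam : 0 ≤ lam) (K : Submodule ℝ H)
    [K.HasOrthogonalProjection] (hφ : ∀ i, φ i ∈ K) (w : H) (b : ℝ) :
    rlssvmObjective lam τ φ y (K.starProjection w) b ≤ rlssvmObjective lam τ φ y w b := by
  rw [rlssvmObjective, rlssvmObjective, empiricalRisk_starProjection K hφ]
  gcongr
  exact K.norm_starProjection_apply_le w

lemma continuous_rlssvmObjective :
    Continuous fun p : H × ℝ => rlssvmObjective lam τ φ y p.1 p.2 := by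
  unfold rlssvmObjective empiricalRisk truncSqLoss
  fun_prop

lemma isBounded_rlssvmObjective_sublevel [Nonempty ι] (hlam : 0 < lam) {c : ℝ}
    (hc : c < τ ^ 2 / 2) :
    IsBounded {p : H × ℝ | rlssvmObjective lam τ φ y p.1 p.2 ≤ c} := by
  set R := √(2 * c / lam)
  set B := ∑ i, |y i| + R * ∑ i, ‖φ i‖ + |τ|
  refine ((Metric.isBounded_closedBall (x := (0 : H)) (r := R)).prod
    (Metric.isBounded_closedBall (x := (0 : ℝ)) (r := B))).subset ?_
  rintro ⟨w, b⟩ (hwb : lam / 2 * ‖w‖ ^ 2 + empiricalRisk τ φ y w b ≤ c)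
  have hrisk := empiricalRisk_nonneg (τ := τ) (φ := φ) (y := y) w b
  have hw : ‖w‖ ≤ R := by
    refine Real.le_sqrt_of_sq_le ?_
    rw [le_div_iff₀ hlam]
    linarith
  obtain ⟨i, hi⟩ : ∃ i, |y i - inner ℝ w (φ i) - b| < |τ| :=
    exists_abs_sub_lt_of_empiricalRisk_lt (by nlinarith [sq_nonneg ‖w‖])
  have hinner : |inner ℝ w (φ i)| ≤ R * ∑ j, ‖φ j‖ :=
    (abs_real_inner_le_norm w (φ i)).trans
      (mul_le_mul hw (single_le_sum (fun j _ => norm_nonneg (φ j)) (mem_univ i))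
        (norm_nonneg _) (hw.trans' (norm_nonneg w)))
  have hy : |y i| ≤ ∑ j, |y j| := single_le_sum (fun j _ => abs_nonneg (y j)) (mem_univ i)
  refine ⟨by simpa using hw, ?_⟩
  simp only [Metric.mem_closedBall, dist_zero_right, Real.norm_eq_abs]
  rw [abs_lt] at hi
  rw [abs_le] at hinner hy ⊢
  constructor <;> linarith [hi.1, hi.2, hinner.1, hinner.2, hy.1, hy.2]

theorem exists_rlssvmObjective_minimizer_mem_span [Nonempty ι] (hlam : 0 < lam) (hτ : τ ≠ 0) :
    ∃ (α : ι → ℝ) (b : ℝ), ∀ (w : H) (b' : ℝ),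
      rlssvmObjective lam τ φ y (∑ i, α i • φ i) b ≤ rlssvmObjective lam τ φ y w b' := by
  set V := Submodule.span ℝ (Set.range φ)
  have : FiniteDimensional ℝ V := .span_of_finite ℝ (Set.finite_range φ)
  have hφV : ∀ i, φ i ∈ V := fun i => Submodule.subset_span ⟨i, rfl⟩
  let i₀ : ι := Classical.arbitrary ι
  let g : V × ℝ → ℝ := fun p => rlssvmObjective lam τ φ y p.1 p.2
  have hg : Continuous g :=
    continuous_rlssvmObjective.comp (continuous_subtype_val.prodMap continuous_id)
  have hg₀ : g (0, y i₀) < τ ^ 2 / 2 := by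
    simpa [g, rlssvmObjective] using empiricalRisk_zero_lt hτ i₀
  have hbdd : IsBounded (Prod.map ((↑) : V → H) id ⁻¹'
      {p | rlssvmObjective lam τ φ y p.1 p.2 ≤ g (0, y i₀)}) :=
    (V.subtypeₗᵢ.isometry.prodMap isometry_id).antilipschitz.isBounded_preimage
      (isBounded_rlssvmObjective_sublevel hlam hg₀)
  obtain ⟨⟨v, b⟩, hmin⟩ := hg.exists_forall_le_of_isBounded (0, y i₀) hbdd
  obtain ⟨α, hα⟩ := (Submodule.mem_span_range_iff_exists_fun ℝ).mp v.2
  refine ⟨α, b, fun w b' => ?_⟩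
  calc rlssvmObjective lam τ φ y (∑ i, α i • φ i) b = g (v, b) := by rw [hα]
    _ ≤ g (V.orthogonalProjectionOnto w, b') := hmin _
    _ ≤ rlssvmObjective lam τ φ y w b' :=
      rlssvmObjective_starProjection_le hlam.le V hφV w b'

end

end

theorem rlssvm_representer_global_minimizer_general
    {H : Type*} [NormedAddCommGroup H] [InnerProductSpace ℝ H]
    (m : ℕ) (hm : 1 ≤ m) (φ : Fin m → H) (y : Fin m → ℝ)
    (lam τ : ℝ) (hlam : 0 < lam) (hτ : 0 < τ)
    (F : H → ℝ → ℝ)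
    (hF : F = fun w b => lam / 2 * ‖w‖ ^ 2
      + 1 / m * ∑ i, 1 / 2 * min ((y i - (inner ℝ w (φ i) : ℝ) - b) ^ 2) (τ ^ 2)) :
    ∃ (α : Fin m → ℝ) (bstar : ℝ),
      ∀ (w : H) (b : ℝ), F (∑ i, α i • φ i) bstar ≤ F w b := by
  have : Nonempty (Fin m) := ⟨⟨0, hm⟩⟩
  obtain rfl : F = rlssvmObjective lam τ φ y := by
    rw [hF]; funext w b; simp [rlssvmObjective, empiricalRisk, truncSqLoss]
  exact exists_rlssvmObjective_minimizer_mem_span hlam hτ.ne'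

/-- Representer theorem for R-LSSVM: let H be a real Hilbert space,
    φ_1, …, φ_m ∈ H with m ≥ 1, y ∈ ℝ^m, λ > 0, τ > 0, and
    F(w, b) = (λ/2)·‖w‖² + (1/m)·Σ_i L_τ(y_i − ⟨w, φ_i⟩ − b) with
    L_τ(ξ) = (1/2)·min(ξ², τ²).  Then there exist α ∈ ℝ^m and b* ∈ ℝ such that
    (Σ_i α_i·φ_i, b*) is a global minimizer of F. -/
theorem rlssvm_representer_global_minimizer
    {H : Type*} [NormedAddCommGroup H] [InnerProductSpace ℝ H] [CompleteSpace H]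
    (m : ℕ) (hm : 1 ≤ m) (φ : Fin m → H) (y : Fin m → ℝ)
    (lam τ : ℝ) (hlam : 0 < lam) (hτ : 0 < τ)
    (F : H → ℝ → ℝ)
    (hF : F = fun w b => lam / 2 * ‖w‖ ^ 2
      + 1 / m * ∑ i, 1 / 2 * min ((y i - (inner ℝ w (φ i) : ℝ) - b) ^ 2) (τ ^ 2)) :
    ∃ (α : Fin m → ℝ) (bstar : ℝ),
      ∀ (w : H) (b : ℝ), F (∑ i, α i • φ i) bstar ≤ F w b :=
  rlssvm_representer_global_minimizer_general m hm φ y lam τ hlam hτ F hF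
end

section
/- Let K ∈ ℝ^{m×m}, y ∈ ℝ^m, λ ≥ 0, τ ≥ 0, and define J(α, b, ω) = (λ/2)·αᵀKα + (1/m)·Σ_{i=1}^m (1/2)·ω_i·ξ_i² + (1/m)·Σ_{i=1}^m (τ²/2)·max(1 − ω_i, 0) with ξ_i = y_i − (Kα)_i − b. Then for every α ∈ ℝ^m and b ∈ ℝ, the infimum of J(α, b, ω) over ω ∈ ℝ^m with ω_i ≥ 0 for all i is attained and equals the primal R-LSSVM objective H(α, b) = (λ/2)·αᵀKα + (1/m)·Σ_{i=1}^m L_τ(y_i − (Kα)_i − b). -/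
open Matrix

lemma aux_pointwise (ξ τ ω : ℝ) (hτ : 0 ≤ τ) (hω : 0 ≤ ω) :
    1 / 2 * min (ξ ^ 2) (τ ^ 2) ≤ 1 / 2 * ω * ξ ^ 2 + τ ^ 2 / 2 * max (1 - ω) 0 := by
  rcases le_or_gt ω 1 with h | h
  · have hmax : max (1 - ω) 0 = 1 - ω := max_eq_left (by linarith)
    rw [hmax]
    have h1 : min (ξ ^ 2) (τ ^ 2) ≤ ξ ^ 2 := min_le_left _ _
    have h2 : min (ξ ^ 2) (τ ^ 2) ≤ τ ^ 2 := min_le_right _ _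
    nlinarith
  · have hmax : max (1 - ω) 0 = 0 := max_eq_right (by linarith)
    rw [hmax]
    have h1 : min (ξ ^ 2) (τ ^ 2) ≤ ξ ^ 2 := min_le_left _ _
    nlinarith [sq_nonneg ξ]

/-- Let K ∈ ℝ^{m×m}, y ∈ ℝ^m, λ ≥ 0, τ ≥ 0, and
    J(α, b, ω) = (λ/2)·αᵀKα + (1/(2m))·Σ_i ω_i·(y_i − (Kα)_i − b)²
                  + (1/m)·Σ_i (τ²/2)·max(1 − ω_i, 0).
    For every α and b, the infimum of J(α, b, ω) over ω with nonnegative entries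
    is attained and equals the primal R-LSSVM objective
    H(α, b) = (λ/2)·αᵀKα + (1/m)·Σ_i (1/2)·min((y i − (Kα)_i − b)², τ²). -/
theorem rlssvm_reweighted_infimum
    (m : ℕ) (K : Matrix (Fin m) (Fin m) ℝ) (y : Fin m → ℝ)
    (lam τ : ℝ) (hlam : 0 ≤ lam) (hτ : 0 ≤ τ)
    (J : (Fin m → ℝ) → ℝ → (Fin m → ℝ) → ℝ)
    (hJ : J = fun α b ω => lam / 2 * (α ⬝ᵥ K.mulVec α)
      + 1 / m * ∑ i, 1 / 2 * ω i * (y i - K.mulVec α i - b) ^ 2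
      + 1 / m * ∑ i, τ ^ 2 / 2 * max (1 - ω i) 0)
    (Hobj : (Fin m → ℝ) → ℝ → ℝ)
    (hHobj : Hobj = fun α b => lam / 2 * (α ⬝ᵥ K.mulVec α)
      + 1 / m * ∑ i, 1 / 2 * min ((y i - K.mulVec α i - b) ^ 2) (τ ^ 2))
    (α : Fin m → ℝ) (b : ℝ) :
    IsLeast ((fun ω => J α b ω) '' {ω : Fin m → ℝ | ∀ i, 0 ≤ ω i}) (Hobj α b) := by
  subst hJ hHobj
  constructor
  · refine ⟨fun i => if (y i - K.mulVec α i - b) ^ 2 ≤ τ ^ 2 then 1 else 0,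
      fun i => by positivity, ?_⟩
    simp only
    have h1 : ∀ i : Fin m,
        1 / 2 * (if (y i - K.mulVec α i - b) ^ 2 ≤ τ ^ 2 then (1:ℝ) else 0)
          * (y i - K.mulVec α i - b) ^ 2
        + τ ^ 2 / 2 * max (1 - (if (y i - K.mulVec α i - b) ^ 2 ≤ τ ^ 2 then (1:ℝ) else 0)) 0
        = 1 / 2 * min ((y i - K.mulVec α i - b) ^ 2) (τ ^ 2) := by
      intro i
      by_cases h : (y i - K.mulVec α i - b) ^ 2 ≤ τ ^ 2
      · simp [h, min_eq_left h]
      · push_neg at h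
        simp [not_le.mpr h, min_eq_right h.le]
        ring
    have hsum : 1 / (m:ℝ) * ∑ i, 1 / 2 * (if (y i - K.mulVec α i - b) ^ 2 ≤ τ ^ 2 then (1:ℝ) else 0)
          * (y i - K.mulVec α i - b) ^ 2
        + 1 / (m:ℝ) * ∑ i, τ ^ 2 / 2 * max (1 - (if (y i - K.mulVec α i - b) ^ 2 ≤ τ ^ 2 then (1:ℝ) else 0)) 0
        = 1 / (m:ℝ) * ∑ i, 1 / 2 * min ((y i - K.mulVec α i - b) ^ 2) (τ ^ 2) := by
      rw [← mul_add, ← Finset.sum_add_distrib, Finset.sum_congr rfl (fun i _ => h1 i)]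
    linarith
  · rintro x ⟨ω, hω, rfl⟩
    simp only
    have key : ∑ i, 1 / 2 * min ((y i - K.mulVec α i - b) ^ 2) (τ ^ 2)
        ≤ ∑ i, (1 / 2 * ω i * (y i - K.mulVec α i - b) ^ 2 + τ ^ 2 / 2 * max (1 - ω i) 0) := by
      apply Finset.sum_le_sum
      intro i _
      exact aux_pointwise (y i - K.mulVec α i - b) τ (ω i) hτ (hω i)
    have hm : (0:ℝ) ≤ 1 / m := by positivity
    have := mul_le_mul_of_nonneg_left key hm
    rw [Finset.sum_add_distrib, mul_add] at this
    linarith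
end

section
/- Let K ∈ ℝ^{m×m}, y ∈ ℝ^m, λ ≥ 0, τ ≥ 0. A pair (α*, b*) ∈ ℝ^m × ℝ is a global minimizer of the primal R-LSSVM objective H(α, b) = (λ/2)·αᵀKα + (1/m)·Σ_{i=1}^m L_τ(y_i − (Kα)_i − b) if and only if there exists a weight vector ω* ∈ ℝ^m with ω*_i ≥ 0 for all i such that (α*, b*, ω*) is a global minimizer of the augmented objective J(α, b, ω) over all α ∈ ℝ^m, b ∈ ℝ and ω ∈ ℝ^m with nonnegative entries. -/
open Matrix

/-- Minimizing jointly over `(x, ω)` is minimizing `H` when `H x` is the infimum of `J x` over `S`,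
attained for every `x`. -/
theorem forall_le_iff_exists_forall_le_of_attained_inf {X Ω β : Type*} [Preorder β]
    (H : X → β) (J : X → Ω → β) (S : Set Ω)
    (hle : ∀ x, ∀ ω ∈ S, H x ≤ J x ω) (hattained : ∀ x, ∃ ω ∈ S, J x ω = H x) (x₀ : X) :
    (∀ x, H x₀ ≤ H x) ↔ ∃ ω₀ ∈ S, ∀ x, ∀ ω ∈ S, J x₀ ω₀ ≤ J x ω := by
  constructor
  · intro hmin
    obtain ⟨ω₀, hω₀, hJ₀⟩ := hattained x₀
    exact ⟨ω₀, hω₀, fun x ω hω => hJ₀ ▸ (hmin x).trans (hle x ω hω)⟩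
  · rintro ⟨ω₀, hω₀, hmin⟩ x
    obtain ⟨ω, hω, hJ⟩ := hattained x
    calc H x₀ ≤ J x₀ ω₀ := hle x₀ ω₀ hω₀
      _ ≤ J x ω := hmin x ω hω
      _ = H x := hJ

theorem min_le_mul_add_mul_max_one_sub {a t ω : ℝ} (ha : 0 ≤ a) (hω : 0 ≤ ω) :
    min a t ≤ ω * a + t * max (1 - ω) 0 := by
  rcases le_or_gt ω 1 with hω1 | hω1
  · rw [max_eq_left (by linarith)]
    nlinarith [min_le_left a t, min_le_right a t]
  · rw [max_eq_right (by linarith)]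
    nlinarith [min_le_left a t]

theorem exists_min_eq_mul_add_mul_max_one_sub (a t : ℝ) :
    ∃ ω : ℝ, 0 ≤ ω ∧ min a t = ω * a + t * max (1 - ω) 0 := by
  rcases le_total a t with hat | hta
  · exact ⟨1, zero_le_one, by simp [min_eq_left hat]⟩
  · exact ⟨0, le_rfl, by simp [min_eq_right hta]⟩

theorem sum_half_min_sq_le {ι : Type*} [Fintype ι] (r ω : ι → ℝ) (t : ℝ) (hω : ∀ i, 0 ≤ ω i) :
    ∑ i, 1 / 2 * min (r i ^ 2) t
      ≤ ∑ i, 1 / 2 * ω i * r i ^ 2 + ∑ i, t / 2 * max (1 - ω i) 0 := by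
  rw [← Finset.sum_add_distrib]
  gcongr with i
  linarith [min_le_mul_add_mul_max_one_sub (t := t) (sq_nonneg (r i)) (hω i)]

theorem exists_sum_half_min_sq_eq {ι : Type*} [Fintype ι] (r : ι → ℝ) (t : ℝ) :
    ∃ ω : ι → ℝ, (∀ i, 0 ≤ ω i) ∧ ∑ i, 1 / 2 * min (r i ^ 2) t
      = ∑ i, 1 / 2 * ω i * r i ^ 2 + ∑ i, t / 2 * max (1 - ω i) 0 := by
  choose ω hω heq using fun i => exists_min_eq_mul_add_mul_max_one_sub (r i ^ 2) t
  refine ⟨ω, hω, ?_⟩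
  rw [← Finset.sum_add_distrib]
  refine Finset.sum_congr rfl fun i _ => ?_
  rw [heq i]
  ring

theorem rlssvm_minimizer_iff_reweighted_minimizer_general
    (m : ℕ) (K : Matrix (Fin m) (Fin m) ℝ) (y : Fin m → ℝ)
    (lam τ : ℝ)
    (J : (Fin m → ℝ) → ℝ → (Fin m → ℝ) → ℝ)
    (hJ : J = fun α b ω => lam / 2 * (α ⬝ᵥ K.mulVec α)
      + 1 / m * ∑ i, 1 / 2 * ω i * (y i - K.mulVec α i - b) ^ 2
      + 1 / m * ∑ i, τ ^ 2 / 2 * max (1 - ω i) 0)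
    (Hobj : (Fin m → ℝ) → ℝ → ℝ)
    (hHobj : Hobj = fun α b => lam / 2 * (α ⬝ᵥ K.mulVec α)
      + 1 / m * ∑ i, 1 / 2 * min ((y i - K.mulVec α i - b) ^ 2) (τ ^ 2))
    (αstar : Fin m → ℝ) (bstar : ℝ) :
    (∀ (α : Fin m → ℝ) (b : ℝ), Hobj αstar bstar ≤ Hobj α b) ↔
    (∃ ωstar : Fin m → ℝ, (∀ i, 0 ≤ ωstar i) ∧
      ∀ (α : Fin m → ℝ) (b : ℝ) (ω : Fin m → ℝ), (∀ i, 0 ≤ ω i) →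
        J αstar bstar ωstar ≤ J α b ω) := by
  have key := forall_le_iff_exists_forall_le_of_attained_inf
    (fun p : (Fin m → ℝ) × ℝ => Hobj p.1 p.2) (fun p ω => J p.1 p.2 ω)
    {ω | ∀ i, 0 ≤ ω i} ?_ ?_ (αstar, bstar)
  · simpa only [Prod.forall, Set.mem_ofPred_eq, exists_prop] using key
  · rintro ⟨α, b⟩ ω hω
    simp only [hJ, hHobj, add_assoc, ← mul_add]
    gcongr
    exact sum_half_min_sq_le _ ω _ hω
  · rintro ⟨α, b⟩
    obtain ⟨ω, hω, heq⟩ := exists_sum_half_min_sq_eq (fun i => y i - K.mulVec α i - b) (τ ^ 2)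
    exact ⟨ω, hω, by simp only [hJ, hHobj, add_assoc, ← mul_add, heq]⟩

/-- Let K ∈ ℝ^{m×m}, y ∈ ℝ^m, λ ≥ 0, τ ≥ 0.  A pair (α*, b*) is a global
    minimizer of the primal R-LSSVM objective
    H(α, b) = (λ/2)·αᵀKα + (1/m)·Σ_i (1/2)·min((y_i − (Kα)_i − b)², τ²)
    if and only if there is a weight vector ω* with nonnegative entries such that
    (α*, b*, ω*) is a global minimizer of the augmented objective
    J(α, b, ω) = (λ/2)·αᵀKα + (1/(2m))·Σ_i ω_i·(y_i − (Kα)_i − b)²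
                  + (1/m)·Σ_i (τ²/2)·max(1 − ω_i, 0)
    over all α, b and nonnegative ω. -/
theorem rlssvm_minimizer_iff_reweighted_minimizer
    (m : ℕ) (K : Matrix (Fin m) (Fin m) ℝ) (y : Fin m → ℝ)
    (lam τ : ℝ) (hlam : 0 ≤ lam) (hτ : 0 ≤ τ)
    (J : (Fin m → ℝ) → ℝ → (Fin m → ℝ) → ℝ)
    (hJ : J = fun α b ω => lam / 2 * (α ⬝ᵥ K.mulVec α)
      + 1 / m * ∑ i, 1 / 2 * ω i * (y i - K.mulVec α i - b) ^ 2
      + 1 / m * ∑ i, τ ^ 2 / 2 * max (1 - ω i) 0)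
    (Hobj : (Fin m → ℝ) → ℝ → ℝ)
    (hHobj : Hobj = fun α b => lam / 2 * (α ⬝ᵥ K.mulVec α)
      + 1 / m * ∑ i, 1 / 2 * min ((y i - K.mulVec α i - b) ^ 2) (τ ^ 2))
    (αstar : Fin m → ℝ) (bstar : ℝ) :
    (∀ (α : Fin m → ℝ) (b : ℝ), Hobj αstar bstar ≤ Hobj α b) ↔
    (∃ ωstar : Fin m → ℝ, (∀ i, 0 ≤ ωstar i) ∧
      ∀ (α : Fin m → ℝ) (b : ℝ) (ω : Fin m → ℝ), (∀ i, 0 ≤ ω i) →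
        J αstar bstar ωstar ≤ J α b ω) :=
  rlssvm_minimizer_iff_reweighted_minimizer_general m K y lam τ J hJ Hobj hHobj αstar bstar
end

section
/- Let m ≥ 1, 1 ≤ r ≤ m, λ > 0, let P ∈ ℝ^{m×r} be partitioned by rows as P = [P_B; P_N] with P_B ∈ ℝ^{r×r} invertible, let y, γ ∈ ℝ^m, let e ∈ ℝ^m be the all-ones vector, and let J = mλ·I_r + PᵀP − (1/m)·(Pᵀe)(eᵀP) (which is invertible). Define α ∈ ℝ^m by α_B = (P_Bᵀ)⁻¹·J⁻¹·Pᵀ·(y − γ − (eᵀ(y − γ)/m)·e) on the first r coordinates and α_N = 0 on the remaining m − r coordinates. Then α solves the reduced low-rank system (mλ·I_r + PᵀP − (1/m)·Pᵀe·eᵀP)·Pᵀα = Pᵀ·((y − γ) − (eᵀ(y − γ)/m)·e). -/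
/-!
With `C = 1 - (1/m) 𝟙𝟙ᵀ` the centering matrix, `J = mλ·1 + Pᵀ C P`, and by Cauchy–Schwarz
`xᵀ C x = ‖x‖² - (∑ xᵢ)²/m ≥ 0`; so `J` is positive definite, in particular invertible.
As `α` vanishes on the rows of `P_N`, `Pᵀ α = P_Bᵀ α_B = J⁻¹ b` for the right-hand side `b`,
whence `J Pᵀ α = b`.
-/

open Matrix

namespace Matrix

noncomputable def centeringMatrix (ι : Type*) [Fintype ι] [DecidableEq ι] : Matrix ι ι ℝ :=
  1 - (Fintype.card ι : ℝ)⁻¹ • vecMulVec 1 1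

section Centering

variable {ι κ : Type*} [Fintype ι] [DecidableEq ι]

theorem isHermitian_centeringMatrix : (centeringMatrix ι).IsHermitian := by
  rw [IsHermitian, conjTranspose_eq_transpose_of_trivial, centeringMatrix, transpose_sub,
    transpose_one, transpose_smul, transpose_vecMulVec]

theorem posSemidef_centeringMatrix : (centeringMatrix ι).PosSemidef := by
  refine .of_dotProduct_mulVec_nonneg isHermitian_centeringMatrix fun x => ?_
  have cauchySchwarz : (∑ i, x i) ^ 2 ≤ (x ⬝ᵥ x) * Fintype.card ι := by
    simpa [dotProduct, sq, mul_comm] using sq_sum_le_card_mul_sum_sq (s := Finset.univ) (f := x)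
  rw [star_trivial, centeringMatrix, sub_mulVec, one_mulVec, smul_mulVec, vecMulVec_mulVec,
    op_smul_eq_smul, dotProduct_sub, dotProduct_smul, dotProduct_smul, dotProduct_one,
    one_dotProduct, smul_eq_mul, smul_eq_mul, ← sq, inv_mul_eq_div, sub_nonneg]
  exact div_le_of_le_mul₀ (Nat.cast_nonneg _) (dotProduct_self_star_nonneg x) cauchySchwarz

theorem transpose_mul_centeringMatrix_mul (P : Matrix ι κ ℝ) :
    Pᵀ * centeringMatrix ι * P
      = Pᵀ * P - (Fintype.card ι : ℝ)⁻¹ • vecMulVec (Pᵀ *ᵥ 1) (Pᵀ *ᵥ 1) := by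
  rw [centeringMatrix, Matrix.mul_sub, Matrix.sub_mul, Matrix.mul_one, Matrix.mul_smul,
    Matrix.smul_mul, mul_vecMulVec, vecMulVec_mul, ← mulVec_transpose]

theorem posDef_smul_one_add_transpose_mul_self_sub_vecMulVec [Finite κ] [DecidableEq κ]
    {c : ℝ} (hc : 0 < c) (P : Matrix ι κ ℝ) :
    (c • (1 : Matrix κ κ ℝ) + Pᵀ * P
      - (Fintype.card ι : ℝ)⁻¹ • vecMulVec (Pᵀ *ᵥ 1) (Pᵀ *ᵥ 1)).PosDef := by
  rw [add_sub_assoc, ← transpose_mul_centeringMatrix_mul]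
  exact (PosDef.one.smul hc).add_posSemidef
    (posSemidef_centeringMatrix.conjTranspose_mul_mul_same P)

end Centering

theorem transpose_mulVec_sumElim_zero {R m₁ m₂ n : Type*} [CommSemiring R]
    [Fintype m₁] [Fintype m₂] (P : Matrix (m₁ ⊕ m₂) n R) (f : m₁ → R) :
    Pᵀ *ᵥ Sum.elim f 0 = (P.submatrix Sum.inl id)ᵀ *ᵥ f := by
  rw [mulVec_transpose, mulVec_transpose, ← fromRows_toRows P, sumElim_vecMul_fromRows,
    zero_vecMul, add_zero]
  rfl

end Matrix

/-- Sparse solution of the reduced low-rank system.  Rows of P ∈ ℝ^{m×r}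
    (m = r + s, 1 ≤ r ≤ m) are split into an invertible top block
    P_B ∈ ℝ^{r×r} (indexed by `Sum.inl`) and a bottom block (indexed by
    `Sum.inr`).  With J = mλ·I_r + PᵀP − (1/m)·(Pᵀe)(eᵀP), the vector α given by
    α_B = (P_Bᵀ)⁻¹·J⁻¹·Pᵀ·(y − γ − (eᵀ(y − γ)/m)·e) on the first r coordinates
    and α_N = 0 elsewhere solves
    (mλ·I_r + PᵀP − (1/m)·Pᵀe·eᵀP)·Pᵀα = Pᵀ·((y − γ) − (eᵀ(y − γ)/m)·e). -/
theorem sparse_solution_reduced_system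
    (r s : ℕ) (hr : 1 ≤ r) (lam : ℝ) (hlam : 0 < lam)
    (P : Matrix (Fin r ⊕ Fin s) (Fin r) ℝ)
    (PB : Matrix (Fin r) (Fin r) ℝ) (hPB : PB = P.submatrix Sum.inl id)
    (hPBunit : IsUnit PB.det)
    (y γ : Fin r ⊕ Fin s → ℝ)
    (e : Fin r ⊕ Fin s → ℝ) (he : e = fun _ => 1)
    (m : ℝ) (hm : m = (r + s : ℕ))
    (J : Matrix (Fin r) (Fin r) ℝ)
    (hJ : J = (m * lam) • (1 : Matrix (Fin r) (Fin r) ℝ) + Pᵀ * P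
      - m⁻¹ • vecMulVec (Pᵀ.mulVec e) (Pᵀ.mulVec e))
    (α : Fin r ⊕ Fin s → ℝ)
    (hα : α = Sum.elim
      ((PBᵀ)⁻¹.mulVec (J⁻¹.mulVec (Pᵀ.mulVec (y - γ - ((e ⬝ᵥ (y - γ)) / m) • e))))
      0) :
    J.mulVec (Pᵀ.mulVec α)
      = Pᵀ.mulVec (y - γ - ((e ⬝ᵥ (y - γ)) / m) • e) := by
  have hm_card : m = Fintype.card (Fin r ⊕ Fin s) := by simp [hm]
  have hmlam : 0 < m * lam := by
    refine mul_pos ?_ hlam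
    rw [hm]
    exact_mod_cast Nat.lt_add_right s hr
  have hJ_posDef : J.PosDef := by
    subst hJ he
    rw [hm_card] at hmlam ⊢
    exact posDef_smul_one_add_transpose_mul_self_sub_vecMulVec hmlam P
  have hJ_unit : IsUnit J.det := (isUnit_iff_isUnit_det J).mp hJ_posDef.isUnit
  have hPBt_unit : IsUnit PBᵀ.det := by rwa [det_transpose]
  rw [hα, transpose_mulVec_sumElim_zero, ← hPB, mulVec_mulVec _ PBᵀ, mul_nonsing_inv _ hPBt_unit,
    one_mulVec, mulVec_mulVec, mul_nonsing_inv _ hJ_unit, one_mulVec]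
end

section
/- Let K ∈ ℝ^{m×m}, y ∈ ℝ^m, λ ≥ 0, τ ≥ 0, p > 0, and m ≥ 1. Define the exact objective H(α, b) = (λ/2)·αᵀKα + (1/m)·Σ_{i=1}^m L_τ(y_i − (Kα)_i − b) and the smoothed objective H_p(α, b) = (λ/2)·αᵀKα + (1/m)·Σ_{i=1}^m (L_sq − L̄_2)(y_i − (Kα)_i − b), where L_sq(ξ) = ξ²/2 and L̄_2(ξ) = (1/2)·max(0, ξ² − τ²) + (1/(2p))·log(1 + exp(−p·|ξ² − τ²|)). Then for every α ∈ ℝ^m and b ∈ ℝ, 0 < H(α, b) − H_p(α, b) ≤ (log 2)/p. -/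
open Matrix

/-- Let K ∈ ℝ^{m×m}, y ∈ ℝ^m, λ ≥ 0, τ ≥ 0, p > 0, m ≥ 1.  With the exact
    objective H(α, b) = (λ/2)·αᵀKα + (1/m)·Σ_i L_τ(y_i − (Kα)_i − b),
    L_τ(ξ) = (1/2)·min(ξ², τ²), and the smoothed objective
    H_p(α, b) = (λ/2)·αᵀKα + (1/m)·Σ_i (L_sq − L̄_2)(y_i − (Kα)_i − b), where
    L_sq(ξ) = ξ²/2 and
    L̄_2(ξ) = (1/2)·max(0, ξ² − τ²) + (1/(2p))·log(1 + exp(−p·|ξ² − τ²|)),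
    every (α, b) satisfies 0 < H(α, b) − H_p(α, b) ≤ (log 2)/p. -/
theorem smoothed_objective_approximation_bound
    (m : ℕ) (hm : 1 ≤ m) (K : Matrix (Fin m) (Fin m) ℝ) (y : Fin m → ℝ)
    (lam τ p : ℝ) (hlam : 0 ≤ lam) (hτ : 0 ≤ τ) (hp : 0 < p)
    (Lsq : ℝ → ℝ) (hLsq : Lsq = fun ξ => ξ ^ 2 / 2)
    (L2bar : ℝ → ℝ)
    (hL2bar : L2bar = fun ξ => 1 / 2 * max 0 (ξ ^ 2 - τ ^ 2)
      + 1 / (2 * p) * Real.log (1 + Real.exp (-p * |ξ ^ 2 - τ ^ 2|)))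
    (Hobj Hp : (Fin m → ℝ) → ℝ → ℝ)
    (hHobj : Hobj = fun α b => lam / 2 * (α ⬝ᵥ K.mulVec α)
      + 1 / m * ∑ i, 1 / 2 * min ((y i - K.mulVec α i - b) ^ 2) (τ ^ 2))
    (hHp : Hp = fun α b => lam / 2 * (α ⬝ᵥ K.mulVec α)
      + 1 / m * ∑ i, (Lsq (y i - K.mulVec α i - b) - L2bar (y i - K.mulVec α i - b))) :
    ∀ (α : Fin m → ℝ) (b : ℝ),
      0 < Hobj α b - Hp α b ∧ Hobj α b - Hp α b ≤ Real.log 2 / p := by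
  intro α b
  subst hLsq hL2bar hHobj hHp
  set ξ : Fin m → ℝ := fun i => y i - K.mulVec α i - b with hξ
  set c : Fin m → ℝ := fun i =>
    1 / (2 * p) * Real.log (1 + Real.exp (-p * |ξ i ^ 2 - τ ^ 2|)) with hc
  have key : ∀ i : Fin m,
      1 / 2 * min ((y i - K.mulVec α i - b) ^ 2) (τ ^ 2)
        - ((y i - K.mulVec α i - b) ^ 2 / 2
          - (1 / 2 * max 0 ((y i - K.mulVec α i - b) ^ 2 - τ ^ 2)
            + 1 / (2 * p) * Real.log (1 + Real.exp (-p * |(y i - K.mulVec α i - b) ^ 2 - τ ^ 2|))))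
      = c i := by
    intro i
    have hmin : min ((ξ i) ^ 2) (τ ^ 2)
        = (ξ i) ^ 2 - max 0 ((ξ i) ^ 2 - τ ^ 2) := by
      rcases le_total ((ξ i) ^ 2) (τ ^ 2) with h | h
      · rw [min_eq_left h, max_eq_left (by linarith)]; ring
      · rw [min_eq_right h, max_eq_right (by linarith)]; ring
    simp only [hc, hξ] at *
    rw [hmin]; ring
  have hdiff : (fun α b => lam / 2 * (α ⬝ᵥ K.mulVec α)
      + 1 / m * ∑ i, 1 / 2 * min ((y i - K.mulVec α i - b) ^ 2) (τ ^ 2)) α b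
      - (fun α b => lam / 2 * (α ⬝ᵥ K.mulVec α)
      + 1 / m * ∑ i, ((y i - K.mulVec α i - b) ^ 2 / 2
        - (1 / 2 * max 0 ((y i - K.mulVec α i - b) ^ 2 - τ ^ 2)
          + 1 / (2 * p) * Real.log (1 + Real.exp (-p * |(y i - K.mulVec α i - b) ^ 2 - τ ^ 2|))))) α b
      = 1 / m * ∑ i, c i := by
    simp only
    rw [show ∀ A B C : ℝ, (A + B) - (A + C) = B - C from fun A B C => by ring]
    rw [← mul_sub, ← Finset.sum_sub_distrib]
    congr 1
    exact Finset.sum_congr rfl fun i _ => key i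
  rw [hdiff]
  have hmpos : (0 : ℝ) < m := by exact_mod_cast hm
  have hcpos : ∀ i : Fin m, 0 < c i := by
    intro i
    apply mul_pos (by positivity)
    apply Real.log_pos
    have := Real.exp_pos (-p * |ξ i ^ 2 - τ ^ 2|)
    linarith
  have hcle : ∀ i : Fin m, c i ≤ Real.log 2 / (2 * p) := by
    intro i
    have hexp : Real.exp (-p * |ξ i ^ 2 - τ ^ 2|) ≤ 1 := by
      apply Real.exp_le_one_iff.mpr
      have : 0 ≤ p * |ξ i ^ 2 - τ ^ 2| := by positivity
      linarith
    have hlog : Real.log (1 + Real.exp (-p * |ξ i ^ 2 - τ ^ 2|)) ≤ Real.log 2 := by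
      apply Real.log_le_log (by linarith [Real.exp_pos (-p * |ξ i ^ 2 - τ ^ 2|)])
      linarith
    calc c i ≤ 1 / (2 * p) * Real.log 2 := by
          apply mul_le_mul_of_nonneg_left hlog (by positivity)
      _ = Real.log 2 / (2 * p) := by ring
  haveI : Nonempty (Fin m) := Fin.pos_iff_nonempty.mp hm
  constructor
  · apply mul_pos (by positivity)
    exact Finset.sum_pos (fun i _ => hcpos i) Finset.univ_nonempty
  · have hsum : ∑ i, c i ≤ m * (Real.log 2 / (2 * p)) := by
      calc ∑ i, c i ≤ ∑ _i : Fin m, Real.log 2 / (2 * p) :=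
            Finset.sum_le_sum fun i _ => hcle i
        _ = m * (Real.log 2 / (2 * p)) := by
            rw [Finset.sum_const, Finset.card_univ, Fintype.card_fin, nsmul_eq_mul]
    have h2 : 1 / (m : ℝ) * ∑ i, c i ≤ Real.log 2 / (2 * p) := by
      calc 1 / (m : ℝ) * ∑ i, c i ≤ 1 / (m : ℝ) * (m * (Real.log 2 / (2 * p))) :=
            mul_le_mul_of_nonneg_left hsum (by positivity)
        _ = Real.log 2 / (2 * p) := by field_simp
    have hlog2 : 0 ≤ Real.log 2 := Real.log_nonneg (by norm_num)
    have : Real.log 2 / (2 * p) ≤ Real.log 2 / p := by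
      apply div_le_div_of_nonneg_left hlog2 hp (by linarith)
    linarith [h2]
end
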